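/- arXiv:2409.17358 — 4 statements merged into one kernel-verified Lean document; each statement's English description precedes it below -/
import Mathlib

section
/- Let i: M ↪ N be a Γ-equivariant immersion of L-analytic manifolds with Galois actions (Γ = Gal(L/F) finite). Then for every Γ-fixed point p ∈ M there exists a Γ-invariant submanifold S ⊆ N of complementary dimension with M ∩ S = {p} and T_p N = T_p M ⊕ T_p S. -/
/-!
Complete the image of the injective differential `d_p f` to all of `L^n` by standard basis
vectors. Their span `W` is Galois-stable, because `Γ` acts coordinatewise and fixes `0` and `1`.
The map `(x, w) ↦ f x + w` has invertible strict derivative `d_p f ⊕ incl` at `(p, 0)`, so it is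
injective near `(p, 0)`; hence near `f p` the affine slice `f p + W` meets the image of `f` only
in `f p`.
-/

open Set Submodule Module Metric

theorem Submodule.exists_isCompl_span_subset {K V : Type*} [DivisionRing K] [AddCommGroup V]
    [Module K V] (R : Submodule K V) {t : Set V} (ht : span K t = ⊤) :
    ∃ c ⊆ t, IsCompl R (span K c) := by
  obtain ⟨b₀, -, hspan₀, hli₀⟩ := exists_linearIndependent K (R : Set V)
  rw [span_eq] at hspan₀
  replace hli₀ : LinearIndepOn K id b₀ := hli₀
  have hext : b₀ ∪ hli₀.extend subset_union_left \ b₀ = hli₀.extend (subset_union_left (t := t)) :=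
    union_sdiff_cancel (hli₀.subset_extend _)
  refine ⟨hli₀.extend subset_union_left \ b₀,
    fun x hx => (hli₀.extend_subset _ hx.1).resolve_left hx.2, ?_, ?_⟩
  · have hli := hli₀.linearIndepOn_extend (subset_union_left (t := t))
    rw [← hext] at hli
    simpa only [image_id, hspan₀] using
      ((linearIndepOn_union_iff disjoint_sdiff_right).1 hli).2.2
  · rw [codisjoint_iff, ← hspan₀, ← span_union, hext, hli₀.span_extend_eq_span, span_union,
      hspan₀, ht, sup_top_eq]

section GaloisAction

variable {Γ L ι : Type*} [Semiring L]

theorem smul_mem_span_of_forall_smul_eq [Monoid Γ] [MulSemiringAction Γ L] {c : Set (ι → L)}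
    (hc : ∀ γ : Γ, ∀ x ∈ c, γ • x = x) (γ : Γ) {w : ι → L} (hw : w ∈ span L c) :
    γ • w ∈ span L c := by
  induction hw using span_induction with
  | mem x hx => rw [hc γ x hx]; exact subset_span hx
  | zero => rw [smul_zero]; exact zero_mem _
  | add x y _ _ hx hy => rw [smul_add]; exact add_mem hx hy
  | smul a x _ hx =>
    have : γ • a • x = (γ • a) • γ • x := funext fun j => smul_mul' γ a (x j)
    rw [this]; exact smul_mem _ _ hx

theorem image_smul_span_of_forall_smul_eq [Group Γ] [MulSemiringAction Γ L]
    {c : Set (ι → L)} (hc : ∀ γ : Γ, ∀ x ∈ c, γ • x = x) (γ : Γ) :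
    (fun v : ι → L => γ • v) '' (span L c : Set (ι → L)) = span L c :=
  Subset.antisymm (image_subset_iff.2 fun _ hw => smul_mem_span_of_forall_smul_eq hc γ hw)
    fun w hw => ⟨γ⁻¹ • w, smul_mem_span_of_forall_smul_eq hc γ⁻¹ hw, smul_inv_smul γ w⟩

theorem smul_basisFun [Monoid Γ] [MulSemiringAction Γ L] [Finite ι] (γ : Γ) (i : ι) :
    γ • Pi.basisFun L ι i = Pi.basisFun L ι i := by
  classical
  rw [Pi.basisFun_apply, ← Pi.single_smul', smul_one]

end GaloisAction

section Slice

variable {𝕜 E : Type*} [NontriviallyNormedField 𝕜] [NormedAddCommGroup E] [NormedSpace 𝕜 E]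

theorem exists_continuousLinearEquiv_coprod_subtypeL {ι : Type*} [Finite ι]
    {f' : E →L[𝕜] (ι → 𝕜)} (hf' : Function.Injective f') {W : Submodule 𝕜 (ι → 𝕜)}
    (hW : IsCompl (LinearMap.range (f' : E →ₗ[𝕜] ι → 𝕜)) W) :
    ∃ e : (E × W) ≃L[𝕜] (ι → 𝕜), (e : E × W →L[𝕜] ι → 𝕜) = f'.coprod W.subtypeL := by
  let e : (E × W) ≃ₗ[𝕜] (ι → 𝕜) :=
    (LinearEquiv.ofInjective (f' : E →ₗ[𝕜] ι → 𝕜) hf').prodCongr (LinearEquiv.refl 𝕜 W) ≪≫ₗ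
      prodEquivOfIsCompl _ _ hW
  exact ⟨{ e with
    continuous_toFun := (f'.coprod W.subtypeL).continuous
    continuous_invFun := LinearMap.continuous_on_pi e.symm.toLinearMap }, rfl⟩

theorem HasStrictFDerivAt.exists_image_inter_affine_eq_singleton {F : Type*}
    [NormedAddCommGroup F] [NormedSpace 𝕜 F] {f : E → F} {f' : E →L[𝕜] F} {p : E}
    (hf : HasStrictFDerivAt f f' p) {W : Submodule 𝕜 F} (e : (E × W) ≃L[𝕜] F)
    (he : (e : E × W →L[𝕜] F) = f'.coprod W.subtypeL) :
    ∃ ε > 0, ∀ s ⊆ ball p ε, p ∈ s →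
      f '' s ∩ ((f p + ·) '' (W : Set F) ∩ ball (f p) ε) = {f p} := by
  have hg : HasStrictFDerivAt (fun q : E × W => f q.1 + q.2) (e : E × W →L[𝕜] F) (p, 0) := by
    rw [he]
    exact (hf.comp (p, (0 : W)) hasStrictFDerivAt_fst).add
      (W.subtypeL.comp (.snd 𝕜 E W)).hasStrictFDerivAt
  obtain ⟨t, hpt, ht, happrox⟩ := hg.approximates_deriv_on_open_nhds
  have hinj := happrox.injOn <|
    e.subsingleton_or_nnnorm_symm_pos.imp id fun h => NNReal.half_lt_self (inv_pos.2 h).ne'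
  obtain ⟨ε, hε, hball⟩ := Metric.isOpen_iff.1 ht _ hpt
  refine ⟨ε, hε, fun s hs hps => Subset.antisymm ?_ ?_⟩
  · rintro _ ⟨⟨x, hx, rfl⟩, ⟨w, hw, hxw⟩, hfx⟩
    have hx0 : (x, (0 : W)) ∈ t := hball <| by
      simpa [Prod.dist_eq, hε] using hs hx
    have hpw : (p, (⟨w, hw⟩ : W)) ∈ t := hball <| by
      have : ‖w‖ = dist (f x) (f p) := by rw [← hxw, dist_eq_norm, add_sub_cancel_left]
      simpa [Prod.dist_eq, hε, this] using hfx
    have hw0 := congrArg (fun q : E × W => (q.2 : F)) (hinj hx0 hpw (by simp [hxw]))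
    simp only [ZeroMemClass.coe_zero] at hw0
    rw [mem_singleton_iff, ← hxw, ← hw0]
    exact add_zero _
  · rintro _ rfl
    exact ⟨mem_image_of_mem f hps, ⟨0, zero_mem W, add_zero _⟩, mem_ball_self hε⟩

end Slice

theorem stmt5_general
    (L : Type*) [NontriviallyNormedField L]
    (Γ : Type*) [Group Γ] [MulSemiringAction Γ L]
    (m n : ℕ) (f : (Fin m → L) → (Fin n → L)) (D : Set (Fin m → L)) (hD : IsOpen D)
    (hf : AnalyticOnNhd L f D)
    (himm : ∀ x ∈ D, Function.Injective (fderiv L f x))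
    (p : Fin m → L) (hp : p ∈ D) :
    ∃ (W : Submodule L (Fin n → L)) (U : Set (Fin n → L)) (D' : Set (Fin m → L)),
      IsOpen U ∧ f p ∈ U ∧ IsOpen D' ∧ p ∈ D' ∧ D' ⊆ D ∧
      Module.finrank L W = n - m ∧
      (∀ γ : Γ, (fun v : Fin n → L => γ • v) '' (W : Set (Fin n → L)) = (W : Set (Fin n → L))) ∧
      (f '' D') ∩ (((fun w => f p + w) '' (W : Set (Fin n → L))) ∩ U) = {f p} ∧
      IsCompl (LinearMap.range ((fderiv L f p : (Fin m → L) →L[L] (Fin n → L)) : (Fin m → L) →ₗ[L] (Fin n → L))) W := by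
  set R := LinearMap.range (fderiv L f p : (Fin m → L) →ₗ[L] Fin n → L)
  obtain ⟨c, hc, hRc⟩ := R.exists_isCompl_span_subset (Pi.basisFun L (Fin n)).span_eq
  have hc_fixed : ∀ γ : Γ, ∀ x ∈ c, γ • x = x := by
    rintro γ _ hx
    obtain ⟨i, rfl⟩ := hc hx
    exact smul_basisFun γ i
  have hrank : finrank L (span L c) = n - m := by
    have hR : finrank L R = m := by
      simpa using LinearMap.finrank_range_of_inj (himm p hp)
    have := finrank_add_eq_of_isCompl hRc
    rw [finrank_fin_fun, hR] at this
    omega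
  obtain ⟨e, he⟩ := exists_continuousLinearEquiv_coprod_subtypeL (himm p hp) hRc
  obtain ⟨ε, hε, hslice⟩ :=
    (hf p hp).hasStrictFDerivAt.exists_image_inter_affine_eq_singleton e he
  exact ⟨span L c, ball (f p) ε, D ∩ ball p ε, isOpen_ball, mem_ball_self hε,
    hD.inter isOpen_ball, ⟨hp, mem_ball_self hε⟩, inter_subset_left, hrank,
    image_smul_span_of_forall_smul_eq hc_fixed,
    hslice _ inter_subset_right ⟨hp, mem_ball_self hε⟩, hRc⟩

/-- equivariant slice lemma, in local coordinates.  Let `Γ = Gal(L/F)` be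
finite, acting on `L` by isometric ring automorphisms and hence diagonally on `L^m`, `L^n`.
Let `i : M ↪ N` be a `Γ`-equivariant immersion of `L`-analytic manifolds, given locally by a
`Γ`-equivariant analytic map `f` on an open set `D ⊆ L^m` with everywhere injective
differential, and let `p ∈ D` be a `Γ`-fixed point.  Then there exists a `Γ`-invariant
(affine, hence analytic) submanifold `S = f(p) + W ⊆ L^n` of complementary dimension with
`f(D) ∩ S = {f(p)}` locally around `f(p)`, and `T_{f p} L^n = im(d_p f) ⊕ W`. -/
theorem stmt5
    (L : Type*) [NontriviallyNormedField L]
    (Γ : Type*) [Group Γ] [Finite Γ] [MulSemiringAction Γ L]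
    (hΓiso : ∀ (γ : Γ) (x : L), ‖γ • x‖ = ‖x‖)
    (m n : ℕ) (f : (Fin m → L) → (Fin n → L)) (D : Set (Fin m → L)) (hD : IsOpen D)
    (hf : AnalyticOnNhd L f D)
    (hequiv : ∀ (γ : Γ), ∀ x ∈ D, γ • x ∈ D ∧ f (γ • x) = γ • f x)
    (himm : ∀ x ∈ D, Function.Injective (fderiv L f x))
    (p : Fin m → L) (hp : p ∈ D) (hpfix : ∀ γ : Γ, γ • p = p) :
    ∃ (W : Submodule L (Fin n → L)) (U : Set (Fin n → L)) (D' : Set (Fin m → L)),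
      IsOpen U ∧ f p ∈ U ∧ IsOpen D' ∧ p ∈ D' ∧ D' ⊆ D ∧
      Module.finrank L W = n - m ∧
      (∀ γ : Γ, (fun v : Fin n → L => γ • v) '' (W : Set (Fin n → L)) = (W : Set (Fin n → L))) ∧
      (f '' D') ∩ (((fun w => f p + w) '' (W : Set (Fin n → L))) ∩ U) = {f p} ∧
      IsCompl (LinearMap.range ((fderiv L f p : (Fin m → L) →L[L] (Fin n → L)) : (Fin m → L) →ₗ[L] (Fin n → L))) W :=
  stmt5_general L Γ m n f D hD hf himm p hp
end

section
/- Let r ≥ 1 and let (V, |·|) be a finite-dimensional normed vector space over a non-archimedean local field F whose norm takes values in the group |ϖ|^{(1/r)ℤ} ⊂ ℝ_{>0} (ϖ a uniformizer). Then there exists a basis (e_i) of V such that |Σ λ_i e_i| = max_i |λ_i||e_i| for all scalars λ_i (the norm is 'diagonalizable'), and the unit ball of the base-changed norm on V ⊗_F F(ϖ^{1/r}) is the free O_{F(ϖ^{1/r})}-lattice spanned by the elements e_i ⊗ ϖ^{w_i/r}, where w_i ∈ ℤ satisfies |e_i| = |ϖ|^{-w_i/r}. -/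
/-!
Since the norm takes values in the discrete set `c ^ ℤ` (`c = ‖ϖ'‖ < 1`), the distance from a
vector `v` to a subspace `W ∌ v`, positive because finite-dimensional subspaces over the complete
field `F` are closed, is attained at some `w₀ ∈ W`. Then `e₀ = v - w₀` satisfies
`‖e₀‖ ≤ ‖e₀ + u‖` for all `u ∈ W`, and the ultrametric inequality upgrades this to
`‖u + a • e₀‖ = max ‖u‖ ‖a • e₀‖`. Extending a diagonalizing basis of a hyperplane by such an `e₀`
gives the splitting by induction on the dimension; the description of the unit ball is then read
off coordinatewise.
-/

open Module

section NormOrthogonal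

variable (F : Type*) {V ι : Type*} [NormedField F] [SeminormedAddCommGroup V] [NormedSpace F V]
  [Fintype ι]

def IsNormOrthogonal (g : ι → V) : Prop :=
  ∀ (l : ι → F) (i : ι), ‖l i • g i‖ ≤ ‖∑ j, l j • g j‖

variable {F}

theorem IsNormOrthogonal.norm_sum_eq_iSup [IsUltrametricDist V] {g : ι → V}
    (hg : IsNormOrthogonal F g) (l : ι → F) :
    ‖∑ i, l i • g i‖ = ⨆ i, ‖l i‖ * ‖g i‖ := by
  have hbdd : BddAbove (Set.range fun i => ‖l i‖ * ‖g i‖) := (Set.finite_range _).bddAbove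
  refine le_antisymm ?_ (Real.iSup_le (fun i => ?_) (norm_nonneg _))
  · refine IsUltrametricDist.norm_sum_le_of_forall_le_of_nonneg
      (Real.iSup_nonneg fun i => by positivity) fun i _ => ?_
    exact (norm_smul (l i) (g i)).trans_le (le_ciSup hbdd i)
  · rw [← norm_smul]
    exact hg l i

theorem IsNormOrthogonal.comp_linearIsometry {V' : Type*} [SeminormedAddCommGroup V']
    [NormedSpace F V'] {g : ι → V} (hg : IsNormOrthogonal F g) (f : V →ₗᵢ[F] V') :
    IsNormOrthogonal F (f ∘ g) := by
  intro l i
  simpa only [Function.comp_apply, ← map_smul, ← map_sum, f.norm_map] using hg l i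

theorem IsNormOrthogonal.linearIndependent {V : Type*} [NormedAddCommGroup V] [NormedSpace F V]
    {g : ι → V} (hg : IsNormOrthogonal F g) (hg0 : ∀ i, g i ≠ 0) : LinearIndependent F g := by
  refine Fintype.linearIndependent_iff.mpr fun l hl i => ?_
  have hi := hg l i
  rw [hl, norm_zero, norm_le_zero_iff] at hi
  exact (smul_eq_zero.mp hi).resolve_right (hg0 i)

theorem norm_add_smul_eq_max [IsUltrametricDist V] {W : Submodule F V} {e : V}
    (he : ∀ u ∈ W, ‖e‖ ≤ ‖e + u‖) {u : V} (hu : u ∈ W) (a : F) :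
    ‖u + a • e‖ = max ‖u‖ ‖a • e‖ := by
  have hae : ‖a • e‖ ≤ ‖u + a • e‖ := by
    rcases eq_or_ne a 0 with rfl | ha
    · simp
    · calc ‖a • e‖ = ‖a‖ * ‖e‖ := norm_smul a e
        _ ≤ ‖a‖ * ‖e + a⁻¹ • u‖ := by gcongr; exact he _ (W.smul_mem _ hu)
        _ = ‖u + a • e‖ := by rw [← norm_smul, smul_add, smul_inv_smul₀ ha, add_comm]
  have hu_le : ‖u‖ ≤ ‖u + a • e‖ :=
    calc ‖u‖ = ‖(u + a • e) + -(a • e)‖ := by rw [add_neg_cancel_right]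
      _ ≤ max ‖u + a • e‖ ‖-(a • e)‖ := IsUltrametricDist.norm_add_le_max _ _
      _ = ‖u + a • e‖ := by rw [norm_neg, max_eq_left hae]
  exact le_antisymm (IsUltrametricDist.norm_add_le_max _ _) (max_le hu_le hae)

theorem IsNormOrthogonal.snoc [IsUltrametricDist V] {n : ℕ} {g : Fin n → V}
    (hg : IsNormOrthogonal F g) {W : Submodule F V} (hgW : ∀ i, g i ∈ W) {e : V}
    (he : ∀ u ∈ W, ‖e‖ ≤ ‖e + u‖) : IsNormOrthogonal F (Fin.snoc g e : Fin (n + 1) → V) := by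
  intro l i
  set u := ∑ j : Fin n, l j.castSucc • g j
  have hu : u ∈ W := W.sum_mem fun j _ => W.smul_mem _ (hgW j)
  have hsum : ∑ j, l j • (Fin.snoc g e : Fin (n + 1) → V) j = u + l (Fin.last n) • e := by
    simp [Fin.sum_univ_castSucc, u]
  rw [hsum, norm_add_smul_eq_max he hu]
  induction i using Fin.lastCases with
  | last => simp
  | cast i => simpa using (hg (fun j => l j.castSucc) i).trans (le_max_left _ _)

end NormOrthogonal

theorem IsClosed.exists_forall_dist_le_of_dist_eq_zpow {X : Type*} [MetricSpace X] {c : ℝ}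
    (hc0 : 0 < c) (hc1 : c < 1) (hdist : ∀ x y : X, x ≠ y → ∃ k : ℤ, dist x y = c ^ k)
    {s : Set X} (hs : IsClosed s) (hne : s.Nonempty) {x : X} (hx : x ∉ s) :
    ∃ y₀ ∈ s, ∀ y ∈ s, dist x y₀ ≤ dist x y := by
  have hpos : 0 < Metric.infDist x s := (hs.notMem_iff_infDist_pos hne).mp hx
  obtain ⟨m, hm⟩ := exists_pow_lt_of_lt_one hpos hc1
  let P : ℤ → Prop := fun k => ∃ y ∈ s, dist x y = c ^ k
  have hbdd : ∀ k, P k → k ≤ m := by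
    rintro k ⟨y, hy, hk⟩
    by_contra! hlt
    have : c ^ k < Metric.infDist x s := by
      calc c ^ k ≤ c ^ (m : ℤ) := zpow_le_zpow_right_of_le_one₀ hc0 hc1.le hlt.le
        _ < _ := by rwa [zpow_natCast]
    exact (Metric.infDist_le_dist_of_mem hy).not_gt (hk ▸ this)
  have hinh : ∃ k, P k := by
    obtain ⟨y, hy⟩ := hne
    obtain ⟨k, hk⟩ := hdist x y (fun h => hx (h ▸ hy))
    exact ⟨k, y, hy, hk⟩
  obtain ⟨k₀, ⟨y₀, hy₀, hk₀⟩, hmax⟩ := Int.exists_greatest_of_bdd ⟨m, hbdd⟩ hinh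
  refine ⟨y₀, hy₀, fun y hy => ?_⟩
  obtain ⟨k, hk⟩ := hdist x y (fun h => hx (h ▸ hy))
  rw [hk₀, hk]
  exact zpow_le_zpow_right_of_le_one₀ hc0 hc1.le (hmax k ⟨y, hy, hk⟩)

theorem Submodule.exists_finrank_eq_of_finrank_eq_succ {K V : Type*} [DivisionRing K]
    [AddCommGroup V] [Module K V] [FiniteDimensional K V] {n : ℕ} (h : finrank K V = n + 1) :
    ∃ W : Submodule K V, finrank K W = n := by
  let b := finBasisOfFinrankEq K V h
  refine ⟨span K (Set.range (b ∘ Fin.castSucc)), ?_⟩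
  rw [finrank_span_eq_card (b.linearIndependent.comp _ (Fin.castSucc_injective n)),
    Fintype.card_fin]

section Splitting

variable {F V : Type*} [NontriviallyNormedField F] [NormedAddCommGroup V] [NormedSpace F V]
  {c : ℝ}

theorem Submodule.exists_notMem_forall_norm_le_norm_add (hc0 : 0 < c) (hc1 : c < 1)
    (hvals : ∀ v : V, v ≠ 0 → ∃ k : ℤ, ‖v‖ = c ^ k) {W : Submodule F V}
    (hW : IsClosed (W : Set V)) (hWtop : W ≠ ⊤) : ∃ e ∉ W, ∀ u ∈ W, ‖e‖ ≤ ‖e + u‖ := by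
  obtain ⟨v, -, hv⟩ := SetLike.exists_of_lt hWtop.lt_top
  have hdist : ∀ x y : V, x ≠ y → ∃ k : ℤ, dist x y = c ^ k := fun x y hxy => by
    simpa only [dist_eq_norm] using hvals _ (sub_ne_zero.mpr hxy)
  obtain ⟨w₀, hw₀, hmin⟩ :=
    hW.exists_forall_dist_le_of_dist_eq_zpow hc0 hc1 hdist ⟨0, W.zero_mem⟩ hv
  refine ⟨v - w₀, fun h => hv (by simpa using W.add_mem h hw₀), fun u hu => ?_⟩
  have h := hmin (w₀ - u) (W.sub_mem hw₀ hu)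
  rwa [dist_eq_norm, dist_eq_norm, ← sub_add] at h

theorem exists_basis_isNormOrthogonal [CompleteSpace F] [IsUltrametricDist V]
    (hc0 : 0 < c) (hc1 : c < 1) (hvals : ∀ v : V, v ≠ 0 → ∃ k : ℤ, ‖v‖ = c ^ k)
    [FiniteDimensional F V] {n : ℕ} (hn : finrank F V = n) :
    ∃ e : Basis (Fin n) F V, IsNormOrthogonal F e := by
  induction n generalizing V with
  | zero => exact ⟨finBasisOfFinrankEq F V hn, fun _ i => i.elim0⟩
  | succ n ih =>
    obtain ⟨W, hW⟩ := Submodule.exists_finrank_eq_of_finrank_eq_succ hn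
    have hWtop : W ≠ ⊤ := by
      rintro rfl
      rw [finrank_top] at hW
      omega
    obtain ⟨eW, heW⟩ := ih (V := W) (fun w hw => hvals w (by simpa using hw)) hW
    obtain ⟨e₀, he₀W, he₀⟩ := W.exists_notMem_forall_norm_le_norm_add hc0 hc1 hvals
      W.closed_of_finiteDimensional hWtop
    have hg := (heW.comp_linearIsometry W.subtypeₗᵢ).snoc (fun i => (eW i).2) he₀
    have hg0 : ∀ i, (Fin.snoc (W.subtypeₗᵢ ∘ eW) e₀ : Fin (n + 1) → V) i ≠ 0 := by
      refine Fin.lastCases ?_ fun i => ?_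
      · simpa using fun h : e₀ = 0 => he₀W (h ▸ W.zero_mem)
      · simpa using eW.ne_zero i
    have hcard : Fintype.card (Fin (n + 1)) = finrank F V := by simp [hn]
    refine ⟨basisOfLinearIndependentOfCardEqFinrank (hg.linearIndependent hg0) hcard, ?_⟩
    rwa [coe_basisOfLinearIndependentOfCardEqFinrank]

end Splitting

abbrev NonarchAddGroupNorm.toNormedAddCommGroup {G : Type*} [AddCommGroup G]
    (p : NonarchAddGroupNorm G) : NormedAddCommGroup G :=
  AddGroupNorm.toNormedAddCommGroup
    { toFun := p, map_zero' := map_zero p, add_le' := map_add_le_add p, neg' := map_neg_eq_map p,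
      eq_zero_of_map_eq_zero' := fun _ => eq_zero_of_map_eq_zero p }

theorem Real.iSup_le_iff_of_finite {ι : Type*} [Finite ι] {f : ι → ℝ} {a : ℝ} (ha : 0 ≤ a) :
    (⨆ i, f i) ≤ a ↔ ∀ i, f i ≤ a :=
  ⟨fun h i => (le_ciSup (Set.finite_range f).bddAbove i).trans h, fun h => Real.iSup_le h ha⟩

theorem stmt8_general
    (F E : Type*) [NontriviallyNormedField F] [NontriviallyNormedField E] [CompleteSpace F]
    (ι : F →+* E) (hι : ∀ x : F, ‖ι x‖ = ‖x‖)
    (ϖ : F) (hϖ0 : ϖ ≠ 0) (hϖ : ‖ϖ‖ < 1)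
    (r : ℕ) (hr : 1 ≤ r) (ϖ' : E) (hϖ' : ϖ' ^ r = ι ϖ)
    (V : Type*) [AddCommGroup V] [Module F V] [FiniteDimensional F V]
    (n : ℕ) (hdim : Module.finrank F V = n)
    (ν : V → ℝ) (hν0 : ∀ v : V, ν v = 0 ↔ v = 0)
    (hsmul : ∀ (a : F) (v : V), ν (a • v) = ‖a‖ * ν v)
    (hna : ∀ v w : V, ν (v + w) ≤ max (ν v) (ν w))
    (hvals : ∀ v : V, v ≠ 0 → ∃ k : ℤ, ν v = ‖ϖ'‖ ^ k) :
    ∃ (e : Module.Basis (Fin n) F V) (w : Fin n → ℤ),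
      (∀ l : Fin n → F, ν (∑ i, l i • e i) = ⨆ i, ‖l i‖ * ν (e i)) ∧
      (∀ i, ν (e i) = ‖ϖ'‖ ^ (-(w i))) ∧
      (∀ μ : Fin n → E, (⨆ i, ‖μ i‖ * ν (e i)) ≤ 1 ↔ ∀ i, ‖μ i‖ ≤ ‖ϖ'‖ ^ (w i)) := by
  have hr0 : r ≠ 0 := by omega
  have hϖ'0 : 0 < ‖ϖ'‖ := norm_pos_iff.mpr (ne_zero_pow hr0 (hϖ' ▸ (map_ne_zero ι).mpr hϖ0))
  have hϖ'1 : ‖ϖ'‖ < 1 :=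
    (pow_lt_one_iff_of_nonneg (norm_nonneg _) hr0).mp (by rwa [← norm_pow, hϖ', hι])
  let : NormedAddCommGroup V := NonarchAddGroupNorm.toNormedAddCommGroup
    { toFun := ν, map_zero' := (hν0 0).mpr rfl, add_le_max' := hna,
      neg' := fun v => by simpa using hsmul (-1) v, eq_zero_of_map_eq_zero' := fun v => (hν0 v).mp }
  let : NormedSpace F V := ⟨fun a v => (hsmul a v).le⟩
  have : IsUltrametricDist V :=
    IsUltrametricDist.isUltrametricDist_of_forall_norm_add_le_max_norm hna
  obtain ⟨e, he⟩ := exists_basis_isNormOrthogonal hϖ'0 hϖ'1 hvals hdim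
  choose k hk using fun i => hvals (e i) (e.ne_zero i)
  refine ⟨e, fun i => -k i, he.norm_sum_eq_iSup, fun i => by rw [neg_neg, hk i], fun μ => ?_⟩
  rw [Real.iSup_le_iff_of_finite zero_le_one]
  refine forall_congr' fun i => ?_
  rw [hk i, ← le_div_iff₀ (zpow_pos hϖ'0 _), one_div, ← zpow_neg]

/-- Goldman–Iwahori splitting and the lattice of the base-changed norm.
Let `F` be a non-archimedean local field (complete, discretely valued with uniformizer `ϖ`,
`‖ϖ‖ < 1`), and let `(V, ν)` be a finite-dimensional normed `F`-vector space whose norm takes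
values in `|ϖ|^{(1/r)ℤ}` — equivalently in `‖ϖ'‖^ℤ`, where `ϖ'` is an `r`-th root of `ϖ` in an
isometric extension `E = F(ϖ^{1/r})`.  Then there is a basis `(eᵢ)` of `V` diagonalizing the
norm, `ν(∑ λᵢ eᵢ) = maxᵢ ‖λᵢ‖ ν(eᵢ)`, with `ν(eᵢ) = ‖ϖ'‖^{-wᵢ}` for integers `wᵢ`; and the
unit ball of the base-changed norm `μ ↦ maxᵢ ‖μᵢ‖ ν(eᵢ)` on `V ⊗_F E` (in the coordinates of
this basis) is the free `O_E`-lattice spanned by the `eᵢ ⊗ ϖ'^{wᵢ}`, i.e. it consists exactly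
of the coordinate vectors with `‖μᵢ‖ ≤ ‖ϖ'‖^{wᵢ}` for all `i`. -/
theorem stmt8
    (F E : Type*) [NontriviallyNormedField F] [NontriviallyNormedField E] [CompleteSpace F]
    (ι : F →+* E) (hι : ∀ x : F, ‖ι x‖ = ‖x‖)
    (ϖ : F) (hϖ0 : ϖ ≠ 0) (hϖ : ‖ϖ‖ < 1)
    (hdisc : ∀ x : F, x ≠ 0 → ∃ k : ℤ, ‖x‖ = ‖ϖ‖ ^ k)
    (r : ℕ) (hr : 1 ≤ r) (ϖ' : E) (hϖ' : ϖ' ^ r = ι ϖ)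
    (V : Type*) [AddCommGroup V] [Module F V] [FiniteDimensional F V]
    (n : ℕ) (hn : 1 ≤ n) (hdim : Module.finrank F V = n)
    (ν : V → ℝ) (hν0 : ∀ v : V, ν v = 0 ↔ v = 0) (hνnn : ∀ v, 0 ≤ ν v)
    (hsmul : ∀ (a : F) (v : V), ν (a • v) = ‖a‖ * ν v)
    (hna : ∀ v w : V, ν (v + w) ≤ max (ν v) (ν w))
    (hvals : ∀ v : V, v ≠ 0 → ∃ k : ℤ, ν v = ‖ϖ'‖ ^ k) :
    ∃ (e : Module.Basis (Fin n) F V) (w : Fin n → ℤ),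
      (∀ l : Fin n → F, ν (∑ i, l i • e i) = ⨆ i, ‖l i‖ * ν (e i)) ∧
      (∀ i, ν (e i) = ‖ϖ'‖ ^ (-(w i))) ∧
      (∀ μ : Fin n → E, (⨆ i, ‖μ i‖ * ν (e i)) ≤ 1 ↔ ∀ i, ‖μ i‖ ≤ ‖ϖ'‖ ^ (w i)) :=
  stmt8_general F E ι hι ϖ hϖ0 hϖ r hr ϖ' hϖ' V n hdim ν hν0 hsmul hna hvals
end

section
/- Let S be a commutative torsion-free monoid with a continuous action of Ẑ (generated by σ) such that the addition map has σ-finite fibres, and let CF(S) be the ring of counting functions on S with convolution product. Then the Adams operations ψ_m, defined by ψ_m(f)(x)_n = Σ_{y ∈ S_{nm}, Tr_{mn/n}(y) = x} f(y)_{nm} for x ∈ S_n (and 0 otherwise), are ring homomorphisms with respect to the convolution product, satisfy ψ_1 = id and ψ_m ∘ ψ_{m'} = ψ_{mm'}, and hence define a λ-ring structure on CF(S). -/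
open scoped Classical

noncomputable section

/-- The ring of values `𝒱 = ∏_{n ≥ 1} ℚ̄`: we record a counting function as a family of
values in `ℚ̄` indexed by `n`. -/
abbrev Kbar : Type := AlgebraicClosure ℚ

variable {S S' : Type}

/-- `f : S → (n ↦ ℚ̄)` is a counting function for the `Ẑ`-action generated by `σ` if
`f(x)_n = 0` unless `x` is fixed by `σ^n`. -/
def IsCF [AddCommMonoid S] (σ : AddAut S) (f : S → ℕ → Kbar) : Prop :=
  ∀ x n, 1 ≤ n → (n • σ) x ≠ x → f x n = 0

/-- σ-finiteness: all fixed point sets `S_n` are finite. -/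
def SigmaFinite [AddCommMonoid S] (σ : AddAut S) : Prop :=
  ∀ n : ℕ, 1 ≤ n → {x : S | (n • σ) x = x}.Finite

/-- Torsion-freeness of the monoid `S`. -/
def TorsionFreeMonoid (S : Type) [AddCommMonoid S] : Prop :=
  ∀ (k : ℕ) (x y : S), 1 ≤ k → k • x = k • y → x = y

/-- The convolution product `(f·g)(x)_n = ∑_{x' + x'' = x, x', x'' ∈ S_n} f(x')_n g(x'')_n`. -/
def conv [AddCommMonoid S] (σ : AddAut S) (f g : S → ℕ → Kbar) : S → ℕ → Kbar :=
  fun x n => ∑ᶠ (p : S × S)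
    (_ : p.1 + p.2 = x ∧ (n • σ) p.1 = p.1 ∧ (n • σ) p.2 = p.2), f p.1 n * g p.2 n

/-- The trace map `Tr_{nm/n} : S_{nm} → S_n`, `y ↦ ∑_{i=1}^m σ^{in}(y)`. -/
def trA [AddCommMonoid S] (σ : AddAut S) (n m : ℕ) (y : S) : S :=
  ∑ i ∈ Finset.range m, (((i + 1) * n) • σ) y

/-- The Adams operation `ψ_m(f)(x)_n = ∑_{y ∈ S_{nm}, Tr_{nm/n}(y) = x} f(y)_{nm}` for
`x ∈ S_n`, and `0` otherwise. -/
def adams [AddCommMonoid S] (σ : AddAut S) (m : ℕ) (f : S → ℕ → Kbar) : S → ℕ → Kbar :=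
  fun x n =>
    if (n • σ) x = x then
      ∑ᶠ (y : S) (_ : ((n * m) • σ) y = y ∧ trA σ n m y = x), f y (n * m)
    else 0

/-- Convolution powers `f^s`. -/
def convPow [AddCommMonoid S] (σ : AddAut S) (f : S → ℕ → Kbar) : ℕ → (S → ℕ → Kbar)
  | 0 => fun x _ => if x = 0 then 1 else 0
  | s + 1 => conv σ f (convPow σ f s)

/-- The exponential `exp(f) = ∑_{s ≥ 0} f^s / s!` (convolution powers). -/
def expCF [AddCommMonoid S] (σ : AddAut S) (f : S → ℕ → Kbar) : S → ℕ → Kbar :=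
  fun x n => ∑ᶠ s : ℕ, ((Nat.factorial s : Kbar))⁻¹ * convPow σ f s x n

/-- The logarithm `log(1 + f) = ∑_{s ≥ 1} (-1)^{s-1} f^s / s` (convolution powers). -/
def log1p [AddCommMonoid S] (σ : AddAut S) (f : S → ℕ → Kbar) : S → ℕ → Kbar :=
  fun x n => ∑ᶠ s : ℕ,
    if 1 ≤ s then ((-1 : Kbar) ^ (s - 1) / (s : Kbar)) * convPow σ f s x n else 0

/-- The plethystic exponential `Sym(f) = exp(∑_{m ≥ 1} ψ_m(f)/m)`. -/
def SymCF [AddCommMonoid S] (σ : AddAut S) (f : S → ℕ → Kbar) : S → ℕ → Kbar :=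
  expCF σ (fun x n => ∑ᶠ m : ℕ, if 1 ≤ m then ((m : Kbar))⁻¹ * adams σ m f x n else 0)

/-- The plethystic logarithm `Log(1 + f) = ∑_{m ≥ 1} (μ(m)/m) ψ_m(log(1 + f))`. -/
def LogCF [AddCommMonoid S] (σ : AddAut S) (f : S → ℕ → Kbar) : S → ℕ → Kbar :=
  fun x n => ∑ᶠ m : ℕ,
    if 1 ≤ m then
      (((ArithmeticFunction.moebius m : ℤ) : Kbar) / (m : Kbar)) * adams σ m (log1p σ f) x n
    else 0

/-- The proper pushforward `φ_!(f)(x) = ∑_{y ∈ φ⁻¹(x)} f(y)`. -/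
def push [AddCommMonoid S] [AddCommMonoid S'] (σ₁ : AddAut S) (φ : S →+ S')
    (f : S → ℕ → Kbar) : S' → ℕ → Kbar :=
  fun x n => ∑ᶠ (y : S) (_ : φ y = x ∧ (n • σ₁) y = y), f y n

end

/-!
At level `n` the Adams operation `ψ_m` is the proper pushforward of `f(·)_{nm}` on `S_{nm}`
along the additive map `Tr_{nm/n} : S_{nm} → S_n`, and convolution on `S_n` is the pushforward
of the external product `f ⊠ g` on `S_n × S_n` along addition. Multiplicativity of `ψ_m` and
`ψ_m ∘ ψ_{m'} = ψ_{mm'}` are then instances of functoriality `(g ∘ h)_! = g_! ∘ h_!`, combined with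
`Tr_{nm/n} ∘ Tr_{nmm'/nm} = Tr_{nmm'/n}`; and `ψ_1 = id` because `Tr_{n/n}` is `σ^n`, the identity
on `S_n`. Functoriality only holds when the fibre sums are honest finite sums (a `finsum` with
infinite support is `0`): for `n ≥ 1` this is σ-finiteness, while at level `0`, where `S_0 = S`
and `Tr` is `y ↦ m • y`, the fibres are subsingletons by torsion-freeness.
-/

open Set

noncomputable section

section Pushforward

variable {α β γ K : Type*}

/-- The proper pushforward `φ_!` of `F` restricted to `A`. -/
def pushOn [AddCommMonoid K] (φ : α → β) (A : Set α) (F : α → K) (b : β) : K :=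
  ∑ᶠ a ∈ A ∩ φ ⁻¹' {b}, F a

section AddCommMonoid

variable [AddCommMonoid K] {φ : α → β} {ψ : β → γ} {A : Set α} {B : Set β} {F : α → K}

theorem pushOn_congr {G : α → K} (h : EqOn F G A) : pushOn φ A F = pushOn φ A G :=
  funext fun _ => finsum_mem_congr rfl fun _ ha => h ha.1

theorem pushOn_congr_map {φ' : α → β} (h : EqOn φ φ' A) : pushOn φ A F = pushOn φ' A F := by
  funext b
  refine finsum_mem_congr ?_ fun _ _ => rfl
  ext a
  simp only [mem_inter_iff, mem_preimage, mem_singleton_iff]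
  exact and_congr_right fun ha => by rw [h ha]

theorem pushOn_eq_zero_of_notMem_image {b : β} (hb : b ∉ φ '' A) : pushOn φ A F b = 0 :=
  finsum_mem_eq_zero_of_forall_eq_zero fun a ha => absurd ⟨a, ha.1, ha.2⟩ hb

theorem pushOn_apply_of_injOn (hφ : InjOn φ A) {a : α} (ha : a ∈ A) :
    pushOn φ A F (φ a) = F a := by
  have : A ∩ φ ⁻¹' {φ a} = {a} :=
    eq_singleton_iff_unique_mem.2 ⟨⟨ha, rfl⟩, fun a' ha' => hφ ha'.1 ha ha'.2⟩
  rw [pushOn, this, finsum_mem_singleton]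

theorem finite_fiber_of_finite_or_injOn (h : A.Finite ∨ InjOn φ A) (b : β) :
    (A ∩ φ ⁻¹' {b}).Finite := by
  rcases h with hA | hφ
  · exact hA.subset inter_subset_left
  · exact Set.Subsingleton.finite fun a ha a' ha' => hφ ha.1 ha'.1 (ha.2.trans ha'.2.symm)

theorem pushOn_comp_of_injOn_left (hψ : InjOn ψ B) (hφ : MapsTo φ A B) :
    pushOn ψ B (pushOn φ A F) = pushOn (ψ ∘ φ) A F := by
  funext c
  by_cases hc : c ∈ ψ '' B
  · obtain ⟨b, hb, rfl⟩ := hc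
    rw [pushOn_apply_of_injOn hψ hb, pushOn, pushOn]
    refine finsum_mem_congr ?_ fun _ _ => rfl
    ext a
    simp only [mem_inter_iff, mem_preimage, mem_singleton_iff, Function.comp_apply]
    exact and_congr_right fun ha => (hψ.eq_iff (hφ ha) hb).symm
  · rw [pushOn_eq_zero_of_notMem_image hc, pushOn_eq_zero_of_notMem_image]
    rintro ⟨a, ha, rfl⟩
    exact hc ⟨φ a, hφ ha, rfl⟩

theorem pushOn_pushOn_eq_finsum_mem_image (hφ : MapsTo φ A B) (c : γ) :
    pushOn ψ B (pushOn φ A F) c = ∑ᶠ b ∈ φ '' (A ∩ (ψ ∘ φ) ⁻¹' {c}), pushOn φ A F b := by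
  refine finsum_mem_inter_support_eq _ _ _ ?_
  ext b
  refine ⟨fun ⟨⟨_, hbc⟩, hb⟩ => ?_, fun ⟨⟨a, ⟨ha, hac⟩, hab⟩, hb⟩ => ?_⟩
  · obtain ⟨a, ha, rfl⟩ := not_not.1 (mt pushOn_eq_zero_of_notMem_image hb)
    exact ⟨⟨a, ⟨ha, hbc⟩, rfl⟩, hb⟩
  · subst hab
    exact ⟨⟨hφ ha, hac⟩, hb⟩

theorem pushOn_comp (h : A.Finite ∨ InjOn φ A) (hφ : MapsTo φ A B) :
    pushOn ψ B (pushOn φ A F) = pushOn (ψ ∘ φ) A F := by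
  funext c
  rw [pushOn_pushOn_eq_finsum_mem_image hφ]
  rcases h with hA | hinj
  · have hfib : ⋃ b ∈ φ '' (A ∩ (ψ ∘ φ) ⁻¹' {c}), A ∩ φ ⁻¹' {b} = A ∩ (ψ ∘ φ) ⁻¹' {c} := by
      ext a
      simp only [mem_iUnion, mem_image, mem_inter_iff, mem_preimage, mem_singleton_iff,
        Function.comp_apply, exists_prop]
      constructor
      · rintro ⟨_, ⟨a', ⟨-, hc⟩, rfl⟩, ha, haa'⟩
        exact ⟨ha, haa' ▸ hc⟩
      · rintro ⟨ha, hc⟩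
        exact ⟨φ a, ⟨a, ⟨ha, hc⟩, rfl⟩, ha, rfl⟩
    refine (finsum_mem_biUnion ?_ ?_ ?_).symm.trans ?_
    · exact fun b _ b' _ hbb' => disjoint_left.2 fun a ha ha' => hbb' (ha.2.symm.trans ha'.2)
    · exact (hA.subset inter_subset_left).image φ
    · exact fun b _ => hA.subset inter_subset_left
    · rw [hfib]
      rfl
  · rw [finsum_mem_image (hinj.mono inter_subset_left), pushOn]
    exact finsum_mem_congr rfl fun a ha => pushOn_apply_of_injOn hinj ha.1

end AddCommMonoid

theorem finsum_mem_mul_finsum_mem [NonUnitalNonAssocSemiring K] {s : Set α} {t : Set β}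
    (hs : s.Finite) (ht : t.Finite) (F : α → K) (G : β → K) :
    (∑ᶠ a ∈ s, F a) * (∑ᶠ b ∈ t, G b) = ∑ᶠ p ∈ s ×ˢ t, F p.1 * G p.2 := by
  rw [finsum_mem_eq_finite_toFinset_sum _ hs, finsum_mem_eq_finite_toFinset_sum _ ht,
    finsum_mem_eq_finite_toFinset_sum _ (hs.prod ht), ← Finite.toFinset_prod hs ht,
    Finset.sum_mul_sum, Finset.sum_product]

theorem pushOn_mul_pushOn [NonUnitalNonAssocSemiring K] {φ : α → β} {A : Set α} {u v : β}
    (hu : (A ∩ φ ⁻¹' {u}).Finite) (hv : (A ∩ φ ⁻¹' {v}).Finite) (F G : α → K) :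
    pushOn φ A F u * pushOn φ A G v
      = pushOn (Prod.map φ φ) (A ×ˢ A) (fun p => F p.1 * G p.2) (u, v) := by
  rw [pushOn, pushOn, pushOn, finsum_mem_mul_finsum_mem hu hv, ← singleton_prod_singleton,
    preimage_prod_map_prod, prod_inter_prod]

end Pushforward

section Convolution

variable {M N K : Type*} [AddCommMonoid M] [AddCommMonoid N] [NonUnitalNonAssocSemiring K]

def convOn (A : Set M) (F G : M → K) : M → K :=
  pushOn (fun p : M × M => p.1 + p.2) (A ×ˢ A) (fun p => F p.1 * G p.2)

theorem convOn_congr {A : Set M} {F F' G G' : M → K} (hF : EqOn F F' A) (hG : EqOn G G' A) :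
    convOn A F G = convOn A F' G' :=
  pushOn_congr fun _ hp => by simp only [hF hp.1, hG hp.2]

theorem convOn_eq_zero_of_notMem {A : AddSubmonoid M} {x : M} (hx : x ∉ A) (F G : M → K) :
    convOn A F G x = 0 :=
  pushOn_eq_zero_of_notMem_image fun ⟨_, hp, hpx⟩ => hx (hpx ▸ A.add_mem hp.1 hp.2)

theorem pushOn_convOn (φ : M →+ N) (A : AddSubmonoid M) {B : Set N} (hφ : MapsTo φ A B)
    (h : (A : Set M).Finite ∨ InjOn φ A) (F G : M → K) :
    pushOn φ A (convOn A F G) = convOn B (pushOn φ A F) (pushOn φ A G) := by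
  have hadd : MapsTo (fun p : M × M => p.1 + p.2) (A ×ˢ A) A := fun p hp => A.add_mem hp.1 hp.2
  have hsum : (φ ∘ fun p : M × M => p.1 + p.2) = (fun q : N × N => q.1 + q.2) ∘ Prod.map φ φ :=
    funext fun p => map_add φ p.1 p.2
  calc pushOn φ A (convOn A F G)
      = pushOn (φ ∘ fun p : M × M => p.1 + p.2) (A ×ˢ A) (fun p => F p.1 * G p.2) := by
        rcases h with hA | hinj
        · exact pushOn_comp (Or.inl (hA.prod hA)) hadd
        · exact pushOn_comp_of_injOn_left hinj hadd
    _ = pushOn (fun q : N × N => q.1 + q.2) (B ×ˢ B)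
          (pushOn (Prod.map φ φ) (A ×ˢ A) fun p => F p.1 * G p.2) := by
        rw [hsum]
        refine (pushOn_comp ?_ (hφ.prodMap hφ : MapsTo (Prod.map φ φ) _ _)).symm
        rcases h with hA | hinj
        exacts [Or.inl (hA.prod hA), Or.inr (hinj.prodMap hinj)]
    _ = convOn B (pushOn φ A F) (pushOn φ A G) := by
        refine congrArg _ (funext fun q => (pushOn_mul_pushOn ?_ ?_ F G).symm) <;>
          exact finite_fiber_of_finite_or_injOn h _

end Convolution

theorem sum_range_rotate_of_eq {M : Type*} [AddCommMonoid M] (g : ℕ → M) {m : ℕ}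
    (hg : g m = g 0) : ∑ i ∈ Finset.range m, g (i + 1) = ∑ i ∈ Finset.range m, g i := by
  cases m with
  | zero => rfl
  | succ m => rw [Finset.sum_range_succ, hg, ← Finset.sum_range_succ']

section Trace

variable {S : Type} [AddCommMonoid S] (σ : AddAut S)

def fixedSubmonoid (n : ℕ) : AddSubmonoid S where
  carrier := {x | (n • σ) x = x}
  add_mem' {a b} (ha : (n • σ) a = a) (hb : (n • σ) b = b) :=
    show (n • σ) (a + b) = a + b by rw [map_add, ha, hb]
  zero_mem' := map_zero _

theorem mem_fixedSubmonoid {n : ℕ} {x : S} : x ∈ fixedSubmonoid σ n ↔ (n • σ) x = x := Iff.rfl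

theorem add_nsmul_apply (a b : ℕ) (x : S) : ((a + b) • σ) x = (a • σ) ((b • σ) x) := by
  rw [add_nsmul]
  rfl

/-- `trA` with all exponents lowered by `n`; on `S_{nm}` the two agree (`trA_eq_trA₀`), and for
`trA₀` transitivity is a plain reindexing of the double sum. -/
def trA₀ (n m : ℕ) (y : S) : S :=
  ∑ i ∈ Finset.range m, ((i * n) • σ) y

theorem trA_eq_apply_trA₀ (n m : ℕ) (y : S) : trA σ n m y = (n • σ) (trA₀ σ n m y) := by
  simp only [trA, trA₀, map_sum, ← add_nsmul_apply]
  exact Finset.sum_congr rfl fun i _ => by ring_nf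

theorem trA_eq_trA₀ {n m : ℕ} {y : S} (hy : y ∈ fixedSubmonoid σ (n * m)) :
    trA σ n m y = trA₀ σ n m y :=
  sum_range_rotate_of_eq (fun i => ((i * n) • σ) y) <| by
    rw [mul_comm m n, hy, zero_mul, zero_nsmul, AddAut.zero_apply]

theorem trA_mem_fixedSubmonoid {n m : ℕ} {y : S} (hy : y ∈ fixedSubmonoid σ (n * m)) :
    trA σ n m y ∈ fixedSubmonoid σ n := by
  have h := trA_eq_apply_trA₀ σ n m y
  rw [trA_eq_trA₀ σ hy] at h ⊢
  exact h.symm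

theorem trA₀_trA₀ (n m m' : ℕ) (z : S) :
    trA₀ σ n m (trA₀ σ (n * m) m' z) = trA₀ σ n (m * m') z := by
  induction m' with
  | zero => simp [trA₀]
  | succ m' ih =>
    simp only [trA₀] at ih ⊢
    rw [Finset.sum_range_succ, Nat.mul_succ, Finset.sum_range_add, ← ih]
    simp only [map_add, Finset.sum_add_distrib, ← add_nsmul_apply]
    congr 1
    exact Finset.sum_congr rfl fun i _ => by ring_nf

theorem trA_trA {n m m' : ℕ} {z : S} (hz : z ∈ fixedSubmonoid σ (n * m * m')) :
    trA σ n m (trA σ (n * m) m' z) = trA σ n (m * m') z := by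
  have hz' : z ∈ fixedSubmonoid σ (n * (m * m')) := by rwa [← mul_assoc]
  rw [trA_eq_trA₀ σ (trA_mem_fixedSubmonoid σ hz), trA_eq_trA₀ σ hz, trA_eq_trA₀ σ hz',
    trA₀_trA₀]

theorem trA_zero_left (m : ℕ) (y : S) : trA σ 0 m y = m • y := by
  simp [trA]

def traceHom (n m : ℕ) : S →+ S where
  toFun := trA σ n m
  map_zero' := by simp [trA]
  map_add' a b := by simp only [trA, map_add, Finset.sum_add_distrib]

theorem finite_or_injOn_trA (hfin : SigmaFinite σ) (htf : TorsionFreeMonoid S) {m : ℕ}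
    (hm : 1 ≤ m) (n : ℕ) :
    (fixedSubmonoid σ (n * m) : Set S).Finite ∨ InjOn (trA σ n m) (fixedSubmonoid σ (n * m)) := by
  rcases Nat.eq_zero_or_pos n with rfl | hn
  · refine Or.inr fun a _ b _ hab => htf m a b hm ?_
    rwa [trA_zero_left, trA_zero_left] at hab
  · exact Or.inl (hfin (n * m) (Nat.mul_pos hn hm))

end Trace

section Adams

variable {S : Type} [AddCommMonoid S] (σ : AddAut S)

theorem adams_apply_of_mem {m n : ℕ} (f : S → ℕ → Kbar) {x : S}
    (hx : x ∈ fixedSubmonoid σ n) :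
    adams σ m f x n = pushOn (trA σ n m) (fixedSubmonoid σ (n * m)) (fun y => f y (n * m)) x :=
  if_pos hx

theorem adams_apply_of_notMem {m n : ℕ} (f : S → ℕ → Kbar) {x : S}
    (hx : x ∉ fixedSubmonoid σ n) : adams σ m f x n = 0 :=
  if_neg hx

theorem conv_eq_convOn (f g : S → ℕ → Kbar) (x : S) (n : ℕ) :
    conv σ f g x n = convOn (fixedSubmonoid σ n) (fun y => f y n) (fun y => g y n) x := by
  simp only [conv, convOn, pushOn, Set.mem_inter_iff, Set.mem_prod, Set.mem_preimage,
    Set.mem_singleton_iff, SetLike.mem_coe, mem_fixedSubmonoid, and_comm]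

theorem adams_conv (hfin : SigmaFinite σ) (htf : TorsionFreeMonoid S) {m : ℕ} (hm : 1 ≤ m)
    (f g : S → ℕ → Kbar) : adams σ m (conv σ f g) = conv σ (adams σ m f) (adams σ m g) := by
  funext x n
  rw [conv_eq_convOn]
  by_cases hx : x ∈ fixedSubmonoid σ n
  · rw [adams_apply_of_mem σ _ hx, convOn_congr (fun y hy => adams_apply_of_mem σ f hy)
      (fun y hy => adams_apply_of_mem σ g hy)]
    simp only [conv_eq_convOn]
    exact congrFun (pushOn_convOn (traceHom σ n m) _ (fun y hy => trA_mem_fixedSubmonoid σ hy)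
      (finite_or_injOn_trA σ hfin htf hm n) _ _) x
  · rw [adams_apply_of_notMem σ _ hx, convOn_eq_zero_of_notMem hx]

theorem adams_one {f : S → ℕ → Kbar} (hf : IsCF σ f) : adams σ 1 f = f := by
  funext x n
  by_cases hx : x ∈ fixedSubmonoid σ n
  · have hid : EqOn (trA σ n 1) id (fixedSubmonoid σ (n * 1)) := fun y hy => by
      simpa [trA, mem_fixedSubmonoid] using hy
    rw [adams_apply_of_mem σ f hx, pushOn_congr_map hid, mul_one]
    exact pushOn_apply_of_injOn (injOn_id _) hx
  · have hn : 1 ≤ n := Nat.one_le_iff_ne_zero.2 fun hn => hx (by simp [hn, mem_fixedSubmonoid])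
    rw [adams_apply_of_notMem σ f hx, hf x n hn hx]

theorem adams_adams (hfin : SigmaFinite σ) (htf : TorsionFreeMonoid S) {m m' : ℕ} (hm' : 1 ≤ m') (f : S → ℕ → Kbar) : adams σ m (adams σ m' f) = adams σ (m * m') f := by
  funext x n
  by_cases hx : x ∈ fixedSubmonoid σ n
  · calc adams σ m (adams σ m' f) x n
        = pushOn (trA σ n m) (fixedSubmonoid σ (n * m))
            (pushOn (trA σ (n * m) m') (fixedSubmonoid σ (n * m * m'))
              (fun z => f z (n * m * m'))) x := by
          rw [adams_apply_of_mem σ _ hx]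
          exact congrFun (pushOn_congr fun y hy => adams_apply_of_mem σ f hy) x
      _ = pushOn (trA σ n m ∘ trA σ (n * m) m') (fixedSubmonoid σ (n * m * m'))
            (fun z => f z (n * m * m')) x := by
          rw [pushOn_comp (finite_or_injOn_trA σ hfin htf hm' (n * m))
            fun z hz => trA_mem_fixedSubmonoid σ hz]
      _ = adams σ (m * m') f x n := by
          rw [pushOn_congr_map (φ := trA σ n m ∘ trA σ (n * m) m') fun z hz => trA_trA σ hz, adams_apply_of_mem σ f hx, mul_assoc]
  · rw [adams_apply_of_notMem σ _ hx, adams_apply_of_notMem σ _ hx]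

end Adams

end

theorem stmt9_general {S : Type} [AddCommMonoid S] (σ : AddAut S)
    (hfin : SigmaFinite σ) (htf : TorsionFreeMonoid S) :
    (∀ (m : ℕ) (f g : S → ℕ → Kbar), 1 ≤ m → IsCF σ f → IsCF σ g →
        adams σ m (conv σ f g) = conv σ (adams σ m f) (adams σ m g)) ∧
    (∀ f : S → ℕ → Kbar, IsCF σ f → adams σ 1 f = f) ∧
    (∀ (m m' : ℕ) (f : S → ℕ → Kbar), 1 ≤ m → 1 ≤ m' → IsCF σ f →
        adams σ m (adams σ m' f) = adams σ (m * m') f) :=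
  ⟨fun _ f g hm _ _ => adams_conv σ hfin htf hm f g, fun _ hf => adams_one σ hf,
    fun _ _ f _ hm' _ => adams_adams σ hfin htf hm' f⟩

/-- On the ring of counting functions of a commutative torsion-free
`Ẑ`-monoid `S` with σ-finite data, the Adams operations `ψ_m` are ring homomorphisms for the
convolution product, satisfy `ψ_1 = id` and `ψ_m ∘ ψ_{m'} = ψ_{mm'}`; hence they define a
λ-ring structure on the counting functions. -/
theorem stmt9 {S : Type} [AddCommMonoid S] (σ : AddAut S)
    (hfin : SigmaFinite σ) (htf : TorsionFreeMonoid S)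
    (hcont : ∀ x : S, ∃ n : ℕ, 1 ≤ n ∧ (n • σ) x = x) :
    (∀ (m : ℕ) (f g : S → ℕ → Kbar), 1 ≤ m → IsCF σ f → IsCF σ g →
        adams σ m (conv σ f g) = conv σ (adams σ m f) (adams σ m g)) ∧
    (∀ f : S → ℕ → Kbar, IsCF σ f → adams σ 1 f = f) ∧
    (∀ (m m' : ℕ) (f : S → ℕ → Kbar), 1 ≤ m → 1 ≤ m' → IsCF σ f →
        adams σ m (adams σ m' f) = adams σ (m * m') f) :=
  stmt9_general σ hfin htf
end

section
/- Let φ: S₁ → S₂ be an injective Ẑ-equivariant homomorphism of commutative torsion-free monoids whose image is a full submonoid (if x ∈ im(φ) and x = x' + x'' in S₂ then x', x'' ∈ im(φ)). Then the pullback φ*: CF(S₂) → CF(S₁), f ↦ f ∘ φ, is a homomorphism of λ-rings with respect to the convolution products and the Adams operations. -/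
open scoped Classical

/-!
Equivariance and injectivity of `φ` identify the fixed point sets `S_n` with
`φ⁻¹(S'_n)` and intertwine the trace maps. Fullness of the image then puts every summand
indexing `(f·g)(φ y)` or `ψ_m(f)(φ y)` in the image of `φ`: a decomposition
`x' + x'' = φ y` directly, and a point `w ∈ S'_{nm}` with `Tr(w) = φ y` because `w` itself
is the last summand `σ^{mn}(w)` of its trace. So `φ` restricts to a bijection between the
index sets of the defining finite sums on both sides.
-/

variable {S S' : Type} [AddCommMonoid S] [AddCommMonoid S']

theorem map_nsmul_addAut_apply {σ₁ : AddAut S} {σ₂ : AddAut S'} {φ : S →+ S'}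
    (hequiv : ∀ x : S, φ (σ₁ x) = σ₂ (φ x)) (n : ℕ) (y : S) :
    φ ((n • σ₁) y) = (n • σ₂) (φ y) := by
  induction n with
  | zero => simp
  | succ k ih => rw [succ_nsmul', succ_nsmul', AddAut.add_apply, AddAut.add_apply, hequiv, ih]

theorem map_nsmul_addAut_apply_eq_iff {σ₁ : AddAut S} {σ₂ : AddAut S'} {φ : S →+ S'}
    (hequiv : ∀ x : S, φ (σ₁ x) = σ₂ (φ x)) (hinj : Function.Injective φ) (n : ℕ) (y : S) :
    (n • σ₂) (φ y) = φ y ↔ (n • σ₁) y = y := by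
  rw [← map_nsmul_addAut_apply hequiv, hinj.eq_iff]

theorem map_trA {σ₁ : AddAut S} {σ₂ : AddAut S'} {φ : S →+ S'}
    (hequiv : ∀ x : S, φ (σ₁ x) = σ₂ (φ x)) (n m : ℕ) (y : S) :
    φ (trA σ₁ n m y) = trA σ₂ n m (φ y) := by
  simp only [trA, map_sum, map_nsmul_addAut_apply hequiv]

theorem Finset.mem_of_sum_mem_of_full {T : Set S'}
    (hfull : ∀ x' x'' : S', x' + x'' ∈ T → x' ∈ T ∧ x'' ∈ T) {ι : Type*} (t : Finset ι)
    (g : ι → S') (h : ∑ i ∈ t, g i ∈ T) : ∀ i ∈ t, g i ∈ T := by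
  induction t using Finset.cons_induction with
  | empty => simp
  | cons a u ha ih =>
    rw [Finset.sum_cons] at h
    simpa only [Finset.forall_mem_cons] using ⟨(hfull _ _ h).1, ih (hfull _ _ h).2⟩

theorem mem_of_trA_mem_of_full {σ : AddAut S'} {T : Set S'}
    (hfull : ∀ x' x'' : S', x' + x'' ∈ T → x' ∈ T ∧ x'' ∈ T) {n m : ℕ} (hm : 1 ≤ m)
    {w : S'} (hw : ((n * m) • σ) w = w) (htr : trA σ n m w ∈ T) : w ∈ T := by
  have hlast := Finset.mem_of_sum_mem_of_full hfull _ _ htr (m - 1)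
    (Finset.mem_range.mpr (Nat.sub_one_lt_of_le hm le_rfl))
  rwa [Nat.sub_add_cancel hm, Nat.mul_comm, hw] at hlast

theorem conv_comp_of_full {σ₁ : AddAut S} {σ₂ : AddAut S'} {φ : S →+ S'}
    (hequiv : ∀ x : S, φ (σ₁ x) = σ₂ (φ x)) (hinj : Function.Injective φ)
    (hfull : ∀ x' x'' : S', x' + x'' ∈ Set.range φ →
        x' ∈ Set.range φ ∧ x'' ∈ Set.range φ)
    (f g : S' → ℕ → Kbar) (y : S) (n : ℕ) :
    conv σ₂ f g (φ y) n = conv σ₁ (fun y n => f (φ y) n) (fun y n => g (φ y) n) y n := by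
  have hfix := map_nsmul_addAut_apply_eq_iff hequiv hinj n
  refine (finsum_mem_eq_of_bijOn (fun q : S × S => (φ q.1, φ q.2)) ⟨?_, ?_, ?_⟩
    fun _ _ => rfl).symm
  · rintro ⟨a, b⟩ ⟨hab, ha, hb⟩
    exact ⟨by simp only [← map_add, hab], (hfix a).mpr ha, (hfix b).mpr hb⟩
  · rintro ⟨a, b⟩ - ⟨c, d⟩ - h
    simp only [Prod.mk.injEq, hinj.eq_iff] at h
    rw [h.1, h.2]
  · rintro ⟨u, v⟩ ⟨huv, hu, hv⟩
    obtain ⟨⟨a, rfl⟩, ⟨b, rfl⟩⟩ := hfull u v ⟨y, huv.symm⟩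
    exact ⟨(a, b), ⟨hinj (by rw [map_add]; exact huv), (hfix a).mp hu, (hfix b).mp hv⟩, rfl⟩

theorem adams_comp_of_full {σ₁ : AddAut S} {σ₂ : AddAut S'} {φ : S →+ S'}
    (hequiv : ∀ x : S, φ (σ₁ x) = σ₂ (φ x)) (hinj : Function.Injective φ)
    (hfull : ∀ x' x'' : S', x' + x'' ∈ Set.range φ →
        x' ∈ Set.range φ ∧ x'' ∈ Set.range φ)
    {m : ℕ} (hm : 1 ≤ m) (f : S' → ℕ → Kbar) (y : S) (n : ℕ) :
    adams σ₂ m f (φ y) n = adams σ₁ m (fun y n => f (φ y) n) y n := by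
  have hfix := map_nsmul_addAut_apply_eq_iff hequiv hinj
  unfold adams
  by_cases hy : (n • σ₁) y = y
  swap
  · rw [if_neg (mt (hfix n y).mp hy), if_neg hy]
  rw [if_pos ((hfix n y).mpr hy), if_pos hy]
  refine (finsum_mem_eq_of_bijOn φ ⟨?_, hinj.injOn, ?_⟩ fun _ _ => rfl).symm
  · rintro z ⟨hz, htr⟩
    exact ⟨(hfix _ z).mpr hz, by rw [← map_trA hequiv, htr]⟩
  · rintro w ⟨hw, htr⟩
    obtain ⟨z, rfl⟩ := mem_of_trA_mem_of_full hfull hm hw (htr ▸ ⟨y, rfl⟩)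
    exact ⟨z, ⟨(hfix _ z).mp hw, hinj (by rw [map_trA hequiv]; exact htr)⟩, rfl⟩

theorem stmt11_general {S S' : Type} [AddCommMonoid S] [AddCommMonoid S']
    (σ₁ : AddAut S) (σ₂ : AddAut S')
    (φ : S →+ S') (hequiv : ∀ x : S, φ (σ₁ x) = σ₂ (φ x))
    (hinj : Function.Injective φ)
    (hfull : ∀ x' x'' : S', x' + x'' ∈ Set.range φ →
        x' ∈ Set.range φ ∧ x'' ∈ Set.range φ) :
    (∀ f g : S' → ℕ → Kbar, IsCF σ₂ f → IsCF σ₂ g →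
        (fun (y : S) (n : ℕ) => conv σ₂ f g (φ y) n)
          = conv σ₁ (fun y n => f (φ y) n) (fun y n => g (φ y) n)) ∧
    (∀ (m : ℕ) (f : S' → ℕ → Kbar), 1 ≤ m → IsCF σ₂ f →
        (fun (y : S) (n : ℕ) => adams σ₂ m f (φ y) n)
          = adams σ₁ m (fun y n => f (φ y) n)) :=
  ⟨fun f g _ _ => funext₂ (conv_comp_of_full hequiv hinj hfull f g),
    fun _ f hm _ => funext₂ (adams_comp_of_full hequiv hinj hfull hm f)⟩

/-- Let `φ : S₁ → S₂` be an injective `Ẑ`-equivariant homomorphism of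
commutative torsion-free monoids whose image is a full submonoid.  Then the pullback
`φ* : f ↦ f ∘ φ` is a homomorphism of λ-rings with respect to the convolution products and
the Adams operations. -/
theorem stmt11 {S S' : Type} [AddCommMonoid S] [AddCommMonoid S']
    (σ₁ : AddAut S) (σ₂ : AddAut S')
    (hfin₁ : SigmaFinite σ₁) (hfin₂ : SigmaFinite σ₂)
    (htf₁ : TorsionFreeMonoid S) (htf₂ : TorsionFreeMonoid S')
    (φ : S →+ S') (hequiv : ∀ x : S, φ (σ₁ x) = σ₂ (φ x))
    (hinj : Function.Injective φ)
    (hfull : ∀ x' x'' : S', x' + x'' ∈ Set.range φ →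
        x' ∈ Set.range φ ∧ x'' ∈ Set.range φ) :
    (∀ f g : S' → ℕ → Kbar, IsCF σ₂ f → IsCF σ₂ g →
        (fun (y : S) (n : ℕ) => conv σ₂ f g (φ y) n)
          = conv σ₁ (fun y n => f (φ y) n) (fun y n => g (φ y) n)) ∧
    (∀ (m : ℕ) (f : S' → ℕ → Kbar), 1 ≤ m → IsCF σ₂ f →
        (fun (y : S) (n : ℕ) => adams σ₂ m f (φ y) n)
          = adams σ₁ m (fun y n => f (φ y) n)) :=
  stmt11_general σ₁ σ₂ φ hequiv hinj hfull
end
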